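/- arXiv:1111.4496 — 4 statements merged into one kernel-verified Lean document; each statement's English description precedes it below -/
import Mathlib

section
/- Let Λ = ⟨σ₁, σ₂⟩ and Δ = ⟨σ₁', σ₂'⟩ be groups in which (σ₁σ₂)² = ε and (σ₁'σ₂')² = ε, and suppose ⟨σ₁⟩ ∩ ⟨σ₂⟩ = {ε} in Λ and ⟨σ₁'⟩ ∩ ⟨σ₂'⟩ = {ε} in Δ. Let β_i = (σ_i, σ_i') in Λ × Δ. Then ⟨β₁⟩ ∩ ⟨β₂⟩ = {ε}. -/
/-- For rotation groups of polyhedra Λ = ⟨σ₁,σ₂⟩, Δ = ⟨σ₁',σ₂'⟩ with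
(σ₁σ₂)² = ε, (σ₁'σ₂')² = ε and ⟨σ₁⟩ ∩ ⟨σ₂⟩ = {ε}, ⟨σ₁'⟩ ∩ ⟨σ₂'⟩ = {ε},
the diagonal generators β_i = (σ_i, σ_i') satisfy ⟨β₁⟩ ∩ ⟨β₂⟩ = {ε}.
(The mix of two polyhedra is a polyhedron.) -/
theorem mix_of_polyhedra_intersection
    {Λ Δ : Type*} [Group Λ] [Group Δ]
    (σ₁ σ₂ : Λ) (σ₁' σ₂' : Δ)
    (hgenΛ : Subgroup.closure {σ₁, σ₂} = ⊤)
    (hgenΔ : Subgroup.closure {σ₁', σ₂'} = ⊤)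
    (hΛ : (σ₁ * σ₂) ^ 2 = 1) (hΔ : (σ₁' * σ₂') ^ 2 = 1)
    (hintΛ : Subgroup.zpowers σ₁ ⊓ Subgroup.zpowers σ₂ = ⊥)
    (hintΔ : Subgroup.zpowers σ₁' ⊓ Subgroup.zpowers σ₂' = ⊥) :
    Subgroup.zpowers ((σ₁, σ₁') : Λ × Δ) ⊓ Subgroup.zpowers ((σ₂, σ₂') : Λ × Δ) = ⊥ := by
  rw [eq_bot_iff]
  rintro ⟨a, b⟩ ⟨h1, h2⟩
  obtain ⟨m, hm⟩ := h1
  obtain ⟨n, hn⟩ := h2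
  have hma : σ₁ ^ m = a := congrArg Prod.fst hm
  have hmb : σ₁' ^ m = b := congrArg Prod.snd hm
  have hna : σ₂ ^ n = a := congrArg Prod.fst hn
  have hnb : σ₂' ^ n = b := congrArg Prod.snd hn
  have ha : a = 1 := by
    have : a ∈ Subgroup.zpowers σ₁ ⊓ Subgroup.zpowers σ₂ := ⟨⟨m, hma⟩, ⟨n, hna⟩⟩
    simpa [hintΛ] using this
  have hb : b = 1 := by
    have : b ∈ Subgroup.zpowers σ₁' ⊓ Subgroup.zpowers σ₂' := ⟨⟨m, hmb⟩, ⟨n, hnb⟩⟩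
    simpa [hintΔ] using this
  simp [Subgroup.mem_bot, Prod.ext_iff, ha, hb]
end

section
/- Let Λ = ⟨σ₁,...,σ_{n-1}⟩ and Δ = ⟨σ₁',...,σ_{n-1}'⟩ be groups with (σ_i⋯σ_j)² = ε and (σ_i'⋯σ_j')² = ε for all i < j, where n is even, m = n/2, σ_m has order p_m ≥ 3 in Λ and σ_m' has order p_m ≥ 3 in Δ, σ_{m-1} has order p_{m-1} in Λ, σ_{m-1}' has order p_{m+1} in Δ, σ_{m+1} has order p_{m+1} in Λ, σ_{m+1}' has order p_{m-1} in Δ, and gcd(p_{m-1}, p_{m+1}) = 1. Set β_i = (σ_i, σ_i'). Then (σ_m², ε) lies in ⟨β_{m-1}, β_m⟩ ∩ ⟨β_m, β_{m+1}⟩ but not in ⟨β_m⟩; in particular ⟨β_{m-1}, β_m⟩ ∩ ⟨β_m, β_{m+1}⟩ ≠ ⟨β_m⟩. -/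
/-- Even-rank non-polytopality. Let Λ = ⟨σ₁,...,σ_{n-1}⟩ and
Δ = ⟨σ₁',...,σ_{n-1}'⟩ satisfy (σ_i⋯σ_j)² = ε for i < j, with n even, m = n/2,
orders as in the mix of a polytope of type {p₁,...,p_{n-1}} with its dual,
gcd(p_{m-1}, p_{m+1}) = 1 and p_m ≥ 3.  Then with β_i = (σ_i, σ_i'),
(σ_m², ε) ∈ ⟨β_{m-1}, β_m⟩ ∩ ⟨β_m, β_{m+1}⟩ but (σ_m², ε) ∉ ⟨β_m⟩;
in particular ⟨β_{m-1}, β_m⟩ ∩ ⟨β_m, β_{m+1}⟩ ≠ ⟨β_m⟩. -/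
theorem even_rank_mix_not_polytopal
    {Λ Δ : Type*} [Group Λ] [Group Δ] (n : ℕ) (hn : Even n) (hn4 : 4 ≤ n)
    (m : ℕ) (hm : m = n / 2)
    (σ : ℕ → Λ) (σ' : ℕ → Δ) (p : ℕ → ℕ)
    (hgenΛ : Subgroup.closure (σ '' Set.Icc 1 (n - 1)) = ⊤)
    (hgenΔ : Subgroup.closure (σ' '' Set.Icc 1 (n - 1)) = ⊤)
    (hrelΛ : ∀ i j, 1 ≤ i → i < j → j ≤ n - 1 →
      (((List.Ico i (j + 1)).map σ).prod) ^ 2 = 1)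
    (hrelΔ : ∀ i j, 1 ≤ i → i < j → j ≤ n - 1 →
      (((List.Ico i (j + 1)).map σ').prod) ^ 2 = 1)
    (hordm : orderOf (σ m) = p m) (hordm' : orderOf (σ' m) = p m)
    (hpm : 3 ≤ p m)
    (hord1 : orderOf (σ (m - 1)) = p (m - 1))
    (hord1' : orderOf (σ' (m - 1)) = p (m + 1))
    (hord2 : orderOf (σ (m + 1)) = p (m + 1))
    (hord2' : orderOf (σ' (m + 1)) = p (m - 1))
    (hcop : Nat.gcd (p (m - 1)) (p (m + 1)) = 1)
    (β : ℕ → Λ × Δ) (hβ : ∀ i, β i = (σ i, σ' i)) :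
    ((σ m ^ 2, (1 : Δ)) ∈
        Subgroup.closure {β (m - 1), β m} ⊓ Subgroup.closure {β m, β (m + 1)}) ∧
    ((σ m ^ 2, (1 : Δ)) ∉ Subgroup.zpowers (β m)) ∧
    (Subgroup.closure {β (m - 1), β m} ⊓ Subgroup.closure {β m, β (m + 1)} ≠
      Subgroup.zpowers (β m)) := by
  obtain ⟨r, hr⟩ := hn
  have hm2 : 2 ≤ m := by omega
  have hmn : m + 1 ≤ n - 1 := by omega
  -- a helper for two-element Ico lists
  have hIco : ∀ a : ℕ, List.Ico a (a + 2) = [a, a + 1] := by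
    intro a
    rw [show a + 2 = (a + 1) + 1 from rfl, List.Ico.succ_top (by omega),
      List.Ico.succ_singleton]
    rfl
  -- the two dihedral-type relations we need
  have hrel1 : (σ (m - 1) * σ m) ^ 2 = 1 := by
    have h := hrelΛ (m - 1) m (by omega) (by omega) (by omega)
    rw [show m + 1 = (m - 1) + 2 by omega, hIco, show m - 1 + 1 = m by omega] at h
    simpa [mul_assoc] using h
  have hrel2 : (σ' m * σ' (m + 1)) ^ 2 = 1 := by
    have h := hrelΔ m (m + 1) (by omega) (by omega) (by omega)
    rw [show m + 1 + 1 = m + 2 from rfl, hIco] at h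
    simpa [mul_assoc] using h
  -- choose t ≡ 1 mod p(m-1), t ≡ 0 mod p(m+1)
  obtain ⟨t, ht1, ht0⟩ := Nat.chineseRemainder hcop 1 0
  have htdvd : p (m + 1) ∣ t := Nat.modEq_zero_iff_dvd.mp ht0
  have hu1 : σ (m - 1) ^ t = σ (m - 1) := by
    have : σ (m - 1) ^ t = σ (m - 1) ^ 1 :=
      pow_eq_pow_iff_modEq.mpr (by rw [hord1]; exact ht1)
    simpa using this
  have hu2 : σ' (m - 1) ^ t = 1 :=
    orderOf_dvd_iff_pow_eq_one.mp (by rw [hord1']; exact htdvd)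
  have hv1 : σ (m + 1) ^ t = 1 :=
    orderOf_dvd_iff_pow_eq_one.mp (by rw [hord2]; exact htdvd)
  have hv2 : σ' (m + 1) ^ t = σ' (m + 1) := by
    have : σ' (m + 1) ^ t = σ' (m + 1) ^ 1 :=
      pow_eq_pow_iff_modEq.mpr (by rw [hord2']; exact ht1)
    simpa using this
  have hβu : β (m - 1) ^ t = (σ (m - 1), (1 : Δ)) := by
    rw [hβ, Prod.pow_mk, hu1, hu2]
  have hβv : β (m + 1) ^ t = ((1 : Λ), σ' (m + 1)) := by
    rw [hβ, Prod.pow_mk, hv1, hv2]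
  -- the key elements
  have hc : (β (m - 1) ^ t * β m) ^ 2 = ((1 : Λ), σ' m ^ 2) := by
    rw [hβu, hβ m, Prod.mk_mul_mk, one_mul, Prod.pow_mk, hrel1]
  have hel1 : β m ^ 2 * ((β (m - 1) ^ t * β m) ^ 2)⁻¹ = (σ m ^ 2, (1 : Δ)) := by
    rw [hc, hβ m, Prod.pow_mk, Prod.inv_mk, Prod.mk_mul_mk, inv_one, mul_one,
      mul_inv_cancel]
  have hel2 : (β m * β (m + 1) ^ t) ^ 2 = (σ m ^ 2, (1 : Δ)) := by
    rw [hβv, hβ m, Prod.mk_mul_mk, mul_one, Prod.pow_mk, hrel2]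
  -- memberships
  have hmem1 : (σ m ^ 2, (1 : Δ)) ∈ Subgroup.closure {β (m - 1), β m} := by
    rw [← hel1]
    have hx : β (m - 1) ∈ Subgroup.closure {β (m - 1), β m} :=
      Subgroup.subset_closure (by simp)
    have hy : β m ∈ Subgroup.closure {β (m - 1), β m} :=
      Subgroup.subset_closure (by simp)
    exact mul_mem (pow_mem hy 2) (inv_mem (pow_mem (mul_mem (pow_mem hx t) hy) 2))
  have hmem2 : (σ m ^ 2, (1 : Δ)) ∈ Subgroup.closure {β m, β (m + 1)} := by
    rw [← hel2]
    have hx : β m ∈ Subgroup.closure {β m, β (m + 1)} :=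
      Subgroup.subset_closure (by simp)
    have hy : β (m + 1) ∈ Subgroup.closure {β m, β (m + 1)} :=
      Subgroup.subset_closure (by simp)
    exact pow_mem (mul_mem hx (pow_mem hy t)) 2
  have hmem : (σ m ^ 2, (1 : Δ)) ∈
      Subgroup.closure {β (m - 1), β m} ⊓ Subgroup.closure {β m, β (m + 1)} :=
    Subgroup.mem_inf.mpr ⟨hmem1, hmem2⟩
  -- non-membership in ⟨β m⟩
  have hnot : (σ m ^ 2, (1 : Δ)) ∉ Subgroup.zpowers (β m) := by
    rintro ⟨k, hk⟩
    have hk' : β m ^ k = (σ m ^ 2, (1 : Δ)) := hk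
    rw [hβ m, Prod.pow_mk] at hk'
    have hk1 : σ m ^ k = σ m ^ 2 := congrArg Prod.fst hk'
    have hk2 : σ' m ^ k = 1 := congrArg Prod.snd hk'
    have hdvd : (p m : ℤ) ∣ k := by
      rw [← hordm']; exact orderOf_dvd_iff_zpow_eq_one.mpr hk2
    obtain ⟨q, hq⟩ := hdvd
    have hσk : σ m ^ k = 1 := by
      rw [hq, zpow_mul, zpow_natCast, ← hordm, pow_orderOf_eq_one, one_zpow]
    have hsq : σ m ^ 2 = 1 := by rw [← hk1, hσk]
    have : p m ∣ 2 := by rw [← hordm]; exact orderOf_dvd_iff_pow_eq_one.mpr hsq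
    have := Nat.le_of_dvd (by norm_num) this
    omega
  refine ⟨hmem, hnot, fun h => hnot (h ▸ hmem)⟩
end

section
/- Let W be a group with commuting involutions δ and ι on its lattice of normal subgroups, both intersection-preserving, modeling duality and enantiomorphism. Let M be a normal subgroup of finite index with W/M finite of order g. Suppose δ(M∩δ(M)) = M∩δ(M) and ι(M∩δ(M)) = M∩δ(M) (i.e., the mix with the dual is directly regular). Then M ∩ δ(M) = M ∩ ι(M) ∩ δ(M) ∩ δ(ι(M)), and writing A = M∩ι(M) and B = δ(M)∩δ(ι(M)) = δ(A), one has |W/(A·B)| = |W/A|²/|W/(A∩B)| ≥ |W/A|²/g². -/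
/-!
Put `K = M ⊓ δ M`, `A = M ⊓ ι M` and `B = δ M ⊓ δ (ι M) = δ A`. Maps preserving intersections
are monotone, so `K = ι K ≤ ι M` and then `K = δ K ≤ δ (ι M)`; hence `A ⊓ B = K`.
For a normal `B` the second isomorphism theorem gives `|W/(A⊔B)|·|W/(A⊓B)| = |W/A|·|W/B|`,
and `|W/B| = |W/A|` because `δ` preserves indices. Finally `|W/K| ≤ |W/M|·|W/δ M| = g²`.
-/

namespace Subgroup

variable {W : Type*} [Group W]

theorem index_sup_mul_index_inf (A B : Subgroup W) [B.Normal] :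
    (A ⊔ B).index * (A ⊓ B).index = A.index * B.index := by
  calc (A ⊔ B).index * (A ⊓ B).index
      = (A ⊔ B).index * ((A ⊓ B).relIndex A * A.index) := by
        rw [relIndex_mul_index inf_le_left]
    _ = (B.relIndex (A ⊔ B) * (A ⊔ B).index) * A.index := by
        rw [inf_relIndex_left, relIndex_sup_right]; ring
    _ = A.index * B.index := by rw [relIndex_mul_index le_sup_right, mul_comm]

theorem map_le_map_of_map_inf {f : Subgroup W → Subgroup W}
    (hf : ∀ N N' : Subgroup W, N.Normal → N'.Normal → f (N ⊓ N') = f N ⊓ f N')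
    {N N' : Subgroup W} (hN : N.Normal) (hN' : N'.Normal) (h : N ≤ N') : f N ≤ f N' :=
  calc f N = f (N ⊓ N') := by rw [inf_eq_left.2 h]
    _ = f N ⊓ f N' := hf N N' hN hN'
    _ ≤ f N' := inf_le_right

end Subgroup

theorem big_chirality_criterion_general
    {W : Type*} [Group W] (δ ι : Subgroup W → Subgroup W)
    (hδn : ∀ N : Subgroup W, N.Normal → (δ N).Normal)
    (hιn : ∀ N : Subgroup W, N.Normal → (ι N).Normal)
    (hδinf : ∀ N N' : Subgroup W, N.Normal → N'.Normal → δ (N ⊓ N') = δ N ⊓ δ N')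
    (hιinf : ∀ N N' : Subgroup W, N.Normal → N'.Normal → ι (N ⊓ N') = ι N ⊓ ι N')
    (hδcard : ∀ N : Subgroup W, N.Normal → Nat.card (W ⧸ δ N) = Nat.card (W ⧸ N))
    (M : Subgroup W) (hM : M.Normal)
    (g : ℕ) (hg : g = Nat.card (W ⧸ M))
    (hδfix : δ (M ⊓ δ M) = M ⊓ δ M) (hιfix : ι (M ⊓ δ M) = M ⊓ δ M) :
    M ⊓ δ M = M ⊓ ι M ⊓ δ M ⊓ δ (ι M) ∧
    (Nat.card (W ⧸ ((M ⊓ ι M) ⊔ (δ M ⊓ δ (ι M)))) *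
        Nat.card (W ⧸ ((M ⊓ ι M) ⊓ (δ M ⊓ δ (ι M)))) =
      Nat.card (W ⧸ (M ⊓ ι M)) ^ 2) ∧
    (Nat.card (W ⧸ ((M ⊓ ι M) ⊔ (δ M ⊓ δ (ι M)))) * g ^ 2 ≥
      Nat.card (W ⧸ (M ⊓ ι M)) ^ 2) := by
  simp only [← Subgroup.index_eq_card] at hδcard hg ⊢
  have := hδn M hM
  have := hιn M hM
  have hK_le_ιM : M ⊓ δ M ≤ ι M :=
    hιfix ▸ Subgroup.map_le_map_of_map_inf hιinf inferInstance hM inf_le_left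
  have hK_le_διM : M ⊓ δ M ≤ δ (ι M) :=
    hδfix ▸ Subgroup.map_le_map_of_map_inf hδinf inferInstance inferInstance hK_le_ιM
  have hK : M ⊓ δ M = M ⊓ ι M ⊓ δ M ⊓ δ (ι M) :=
    le_antisymm (le_inf (le_inf (le_inf inf_le_left hK_le_ιM) inf_le_right) hK_le_διM)
      (inf_le_left.trans (inf_le_inf_right _ inf_le_left))
  have hB : δ M ⊓ δ (ι M) = δ (M ⊓ ι M) := (hδinf M (ι M) hM inferInstance).symm
  have := hδn (M ⊓ ι M) inferInstance
  have hindex : (M ⊓ ι M ⊔ δ M ⊓ δ (ι M)).index * (M ⊓ ι M ⊓ (δ M ⊓ δ (ι M))).index =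
      (M ⊓ ι M).index ^ 2 := by
    rw [hB, Subgroup.index_sup_mul_index_inf, hδcard _ inferInstance, sq]
  refine ⟨hK, hindex, ?_⟩
  calc (M ⊓ ι M).index ^ 2
      = (M ⊓ ι M ⊔ δ M ⊓ δ (ι M)).index * (M ⊓ δ M).index := by
        rw [← hindex, hK, inf_assoc (M ⊓ ι M)]
    _ ≤ (M ⊓ ι M ⊔ δ M ⊓ δ (ι M)).index * (M.index * (δ M).index) :=
        Nat.mul_le_mul_left _ Subgroup.index_inf_le
    _ = (M ⊓ ι M ⊔ δ M ⊓ δ (ι M)).index * g ^ 2 := by rw [hδcard M hM, hg, sq]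

/-- Let δ and ι be commuting, intersection-preserving involutions on
the normal subgroups of W (duality and enantiomorphism), with δ preserving the index
of normal subgroups.  Let M be normal with W/M finite of order g.  If M ∩ δ(M) is
invariant under both δ and ι (the mix with the dual is directly regular), then
M ∩ δ(M) = M ∩ ι(M) ∩ δ(M) ∩ δ(ι(M)), and with A = M ∩ ι(M), B = δ(M) ∩ δ(ι(M)),
|W/(A·B)|·|W/(A∩B)| = |W/A|² and |W/(A·B)|·g² ≥ |W/A|². -/
theorem big_chirality_criterion
    {W : Type*} [Group W] (δ ι : Subgroup W → Subgroup W)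
    (hδn : ∀ N : Subgroup W, N.Normal → (δ N).Normal)
    (hιn : ∀ N : Subgroup W, N.Normal → (ι N).Normal)
    (hδδ : ∀ N : Subgroup W, N.Normal → δ (δ N) = N)
    (hιι : ∀ N : Subgroup W, N.Normal → ι (ι N) = N)
    (hcomm : ∀ N : Subgroup W, N.Normal → δ (ι N) = ι (δ N))
    (hδinf : ∀ N N' : Subgroup W, N.Normal → N'.Normal → δ (N ⊓ N') = δ N ⊓ δ N')
    (hιinf : ∀ N N' : Subgroup W, N.Normal → N'.Normal → ι (N ⊓ N') = ι N ⊓ ι N')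
    (hδcard : ∀ N : Subgroup W, N.Normal → Nat.card (W ⧸ δ N) = Nat.card (W ⧸ N))
    (M : Subgroup W) (hM : M.Normal) [Finite (W ⧸ M)] [Finite (W ⧸ ι M)]
    (g : ℕ) (hg : g = Nat.card (W ⧸ M))
    (hδfix : δ (M ⊓ δ M) = M ⊓ δ M) (hιfix : ι (M ⊓ δ M) = M ⊓ δ M) :
    M ⊓ δ M = M ⊓ ι M ⊓ δ M ⊓ δ (ι M) ∧
    (Nat.card (W ⧸ ((M ⊓ ι M) ⊔ (δ M ⊓ δ (ι M)))) *
        Nat.card (W ⧸ ((M ⊓ ι M) ⊓ (δ M ⊓ δ (ι M)))) =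
      Nat.card (W ⧸ (M ⊓ ι M)) ^ 2) ∧
    (Nat.card (W ⧸ ((M ⊓ ι M) ⊔ (δ M ⊓ δ (ι M)))) * g ^ 2 ≥
      Nat.card (W ⧸ (M ⊓ ι M)) ^ 2) :=
  big_chirality_criterion_general δ ι hδn hιn hδinf hιinf hδcard M hM g hg hδfix hιfix
end

section
/- In any group generated by σ₁, σ₂ satisfying σ₂σ₁(σ₂σ₁⁻¹σ₂)^c = ε together with σ₁³ = σ₂³ = (σ₁σ₂)² = ε, one has σ₁ = σ₂⁻¹ (treating separately the cases c odd and c even). -/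
/-- In any group with σ₂σ₁(σ₂σ₁⁻¹σ₂)^c = ε, σ₁³ = σ₂³ = (σ₁σ₂)² = ε,
one has σ₁ = σ₂⁻¹. -/
theorem torus_comix_reduction
    {G : Type*} [Group G] (σ₁ σ₂ : G) (c : ℕ)
    (h1 : σ₁ ^ 3 = 1) (h2 : σ₂ ^ 3 = 1) (h3 : (σ₁ * σ₂) ^ 2 = 1)
    (hrel : σ₂ * σ₁ * (σ₂ * σ₁⁻¹ * σ₂) ^ c = 1) :
    σ₁ = σ₂⁻¹ := by
  have hinvx : σ₁⁻¹ = σ₁ ^ 2 := inv_eq_of_mul_eq_one_right (by rw [← pow_succ']; exact h1)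
  have hinvy : σ₂⁻¹ = σ₂ ^ 2 := inv_eq_of_mul_eq_one_right (by rw [← pow_succ']; exact h2)
  -- (σ₂σ₁)² = 1
  have hyx2 : (σ₂ * σ₁) ^ 2 = 1 := by
    have e : (σ₂ * σ₁) ^ 2 = σ₂ * (σ₁ * σ₂) ^ 2 * σ₂⁻¹ := by (try simp only [pow_succ, pow_zero, one_mul]); group
    rw [e, h3]; group
  -- σ₁⁻¹σ₂⁻¹ = σ₂σ₁
  have hE : σ₁⁻¹ * σ₂⁻¹ = σ₂ * σ₁ := by
    rw [← mul_inv_rev]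
    exact inv_eq_of_mul_eq_one_right (by rw [← sq]; exact hyx2)
  -- σ₂σ₁σ₂ = σ₁⁻¹
  have hB : σ₂ * σ₁ * σ₂ = σ₁⁻¹ := by
    apply eq_inv_of_mul_eq_one_left
    have e : σ₂ * σ₁ * σ₂ * σ₁ = (σ₂ * σ₁) ^ 2 := by (try simp only [pow_succ, pow_zero, one_mul]); group
    rw [e, hyx2]
  -- (σ₂σ₁⁻¹σ₂)² = 1
  have ht : (σ₂ * σ₁⁻¹ * σ₂) ^ 2 = 1 := by
    have e1 : (σ₂ * σ₁⁻¹ * σ₂) ^ 2 = σ₂ * σ₁⁻¹ * σ₂ ^ 2 * σ₁⁻¹ * σ₂ := by (try simp only [pow_succ, pow_zero, one_mul]); group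
    rw [e1, ← hinvy]
    have e2 : σ₂ * σ₁⁻¹ * σ₂⁻¹ * σ₁⁻¹ * σ₂ = σ₂ * (σ₁⁻¹ * σ₂⁻¹) * (σ₁⁻¹ * σ₂) := by group
    rw [e2, hE]
    have e3 : σ₂ * (σ₂ * σ₁) * (σ₁⁻¹ * σ₂) = σ₂ ^ 3 := by (try simp only [pow_succ, pow_zero, one_mul]); group
    rw [e3]; simp only [pow_succ, pow_zero, one_mul] at h2 ⊢; exact h2
  rcases Nat.even_or_odd c with ⟨k, hk⟩ | ⟨k, hk⟩
  · -- c even : (σ₂σ₁⁻¹σ₂)^c = 1, so σ₂σ₁ = 1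
    have hp : (σ₂ * σ₁⁻¹ * σ₂) ^ c = 1 := by
      rw [hk, ← two_mul, pow_mul, ht, one_pow]
    rw [hp, mul_one] at hrel
    exact (inv_eq_of_mul_eq_one_right hrel).symm
  · -- c odd : (σ₂σ₁⁻¹σ₂)^c = σ₂σ₁⁻¹σ₂
    have hp : (σ₂ * σ₁⁻¹ * σ₂) ^ c = σ₂ * σ₁⁻¹ * σ₂ := by
      rw [hk, pow_succ, pow_mul, ht, one_pow, one_mul]
    rw [hp] at hrel
    have e : σ₂ * σ₁ * (σ₂ * σ₁⁻¹ * σ₂) = (σ₂ * σ₁ * σ₂) * σ₁⁻¹ * σ₂ := by group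
    rw [e, hB] at hrel
    -- σ₁⁻¹ * σ₁⁻¹ * σ₂ = 1
    have hy : σ₂ = σ₁ * σ₁ := by
      have := hrel
      calc σ₂ = σ₁ * σ₁ * (σ₁⁻¹ * σ₁⁻¹ * σ₂) := by group
        _ = σ₁ * σ₁ := by rw [this]; group
    have : σ₂ = σ₁⁻¹ := by rw [hy, hinvx, sq]
    rw [this, inv_inv]
end
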